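/- Let A, B be nondecreasing sequences of length k over the extended reals, and consider the multiset M = {A(j) + B(r) : 1 ≤ j, r ≤ k}. Then for every i ≤ k, the i-th smallest element of M is realized by a pair (j, r) with j + r ≤ i + 1; in particular, the k smallest elements of M are among the pairs (j, r) with j + r ≤ k + 1, a set of size O(k²) whose k-best prefix can be extracted. -/

import Mathlib

/-!
Let `v` be the `i`-th smallest pairwise sum and pick a pair `q = (j, r)` attaining `v` that is
minimal for the product order. Every pair strictly below `q` in the rectangle `[0, j] × [0, r]`
has a sum `≤ v` by monotonicity, and in fact `< v` by minimality of `q`. At most `i` entries of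
the sorted multiset lie strictly below its `i`-th entry, so `(j + 1) (r + 1) - 1 ≤ i`, and in
particular `j + r ≤ i`.
-/

open Finset

theorem List.Pairwise.countP_lt_getElem_le {α : Type*} [Preorder α] [DecidableLT α] {l : List α}
    (hl : l.Pairwise (· ≤ ·)) {i : ℕ} (hi : i < l.length) :
    l.countP (· < l[i]) ≤ i := by
  have hdrop : (l.drop i).countP (· < l[i]) = 0 := by
    rw [List.drop_eq_getElem_cons hi, List.countP_eq_zero]
    have hge := (List.pairwise_cons.mp (List.drop_eq_getElem_cons hi ▸ hl.drop)).1
    intro a ha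
    rcases List.mem_cons.mp ha with rfl | ha
    · simp
    · simpa using not_lt_of_ge (hge a ha)
  calc l.countP (· < l[i])
      = (l.take i).countP (· < l[i]) + (l.drop i).countP (· < l[i]) := by
        rw [← List.countP_append, List.take_append_drop]
    _ ≤ (l.take i).length := by rw [hdrop, add_zero]; exact List.countP_le_length
    _ ≤ i := List.length_take_le _ _

theorem Multiset.countP_lt_sort_getElem_le {α : Type*} [LinearOrder α] (s : Multiset α)
    {i : ℕ} (hi : i < (s.sort (· ≤ ·)).length) :
    s.countP (· < (s.sort (· ≤ ·))[i]) ≤ i := by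
  have h := (s.pairwise_sort (· ≤ ·)).countP_lt_getElem_le hi
  rwa [← Multiset.coe_countP, Multiset.sort_eq] at h

theorem Monotone.exists_apply_eq_forall_lt_apply_lt {ι β : Type*} [Preorder ι] [WellFoundedLT ι]
    [PartialOrder β] {f : ι → β} (hf : Monotone f) (q₀ : ι) :
    ∃ q, f q = f q₀ ∧ ∀ p < q, f p < f q := by
  obtain ⟨q, hq, hmin⟩ := wellFounded_lt.has_min {p | f p = f q₀} ⟨q₀, rfl⟩
  refine ⟨q, hq, fun p hpq => (hf hpq.le).lt_of_ne fun hpq' => hmin p ?_ hpq⟩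
  exact hpq'.trans hq

theorem Fin.add_le_card_Iio_prod {m n : ℕ} (q : Fin m × Fin n) :
    (q.1 : ℕ) + q.2 ≤ #(Iio q) := by
  rw [card_Iio_eq_card_Iic_sub_one, card_Iic_prod, Fin.card_Iic, Fin.card_Iic]
  have : ((q.1 : ℕ) + 1) * (q.2 + 1) = q.1 * q.2 + q.1 + q.2 + 1 := by ring
  omega

/-- Let `A, B` be nondecreasing length-`k` sequences of extended reals and
`M` the multiset of pairwise sums `{A j + B r}`. Then for every `i < k`, the `i`-th
smallest element of `M` (0-indexed; i.e. the `(i+1)`-st smallest, 1-indexed) is realized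
by a pair `(j, r)` with `j + r ≤ i` (0-indexed; 1-indexed: `j + r ≤ i + 1`). -/
theorem k_best_pairwise_sums_staircase (k : ℕ) (A B : Fin k → EReal)
    (hA : Monotone A) (hB : Monotone B) :
    ∀ i : Fin k, ∃ j r : Fin k, (j : ℕ) + (r : ℕ) ≤ (i : ℕ) ∧
      (Multiset.sort
          ((Finset.univ.val : Multiset (Fin k × Fin k)).map
            (fun p => A p.1 + B p.2)) (· ≤ ·)).getD (i : ℕ) 0 = A j + B r := by
  intro i
  set f : Fin k × Fin k → EReal := fun p => A p.1 + B p.2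
  set M := (univ.val : Multiset (Fin k × Fin k)).map f
  have hi : (i : ℕ) < (M.sort (· ≤ ·)).length := by
    simpa [M] using i.isLt.trans_le (Nat.le_mul_self k)
  obtain ⟨q₀, -, hq₀⟩ := Multiset.mem_map.mp
    ((M.mem_sort (· ≤ ·)).mp (List.getElem_mem hi))
  have hf : Monotone f := (hA.comp monotone_fst).add (hB.comp monotone_snd)
  obtain ⟨q, hq, hbelow⟩ := hf.exists_apply_eq_forall_lt_apply_lt q₀
  rw [List.getD_eq_getElem _ _ hi, ← hq₀, ← hq]
  refine ⟨q.1, q.2, ?_, rfl⟩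
  calc (q.1 : ℕ) + q.2 ≤ #(Iio q) := Fin.add_le_card_Iio_prod q
    _ ≤ #(univ.filter (f · < f q)) := card_le_card fun p hp => by
        simpa using hbelow p (mem_Iio.mp hp)
    _ = M.countP (· < f q) := by rw [Multiset.countP_map]; rfl
    _ ≤ i := by simpa [hq₀, hq] using M.countP_lt_sort_getElem_le hi
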